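/- Let r > 0, let ω̂ : ℝ → ℝ be defined by ω̂(x) = 1 for 0 < x < r, ω̂(x) = -1 for -r < x < 0, and ω̂(x) = 0 otherwise, and let ω̃ : ℝ → ℝ be defined by ω̃(x) = |x| for -r < x < r and ω̃(x) = r otherwise. Then for every u : ℝ → ℝ that is continuous and integrable, the convolution ω̃ * u is differentiable and its derivative equals the convolution ω̂ * u, i.e., (d/dx)(ω̃ * u)(x) = (ω̂ * u)(x) for all x. -/

import Mathlib

open MeasureTheory

/-- The two non-local advection formulations are equivalent: the convolution with the
Lipschitz kernel `ω̃` has derivative equal to the convolution with the sign-type kernel `ω̂`. -/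
theorem stmt_0 (r : ℝ) (hr : 0 < r)
    (ωhat ωtil : ℝ → ℝ)
    (hωhat : ∀ x, ωhat x = if 0 < x ∧ x < r then 1 else if -r < x ∧ x < 0 then -1 else 0)
    (hωtil : ∀ x, ωtil x = if -r < x ∧ x < r then |x| else r)
    (u : ℝ → ℝ) (hu : Continuous u) (hui : Integrable u) :
    ∀ x : ℝ,
      HasDerivAt (fun z => ∫ y, ωtil (z - y) * u y) (∫ y, ωhat (x - y) * u y) x := by
  -- ωtil is min |t| r
  have htil_min : ∀ t, ωtil t = min |t| r := by
    intro t; rw [hωtil]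
    split_ifs with h
    · exact (min_eq_left (le_of_lt (abs_lt.mpr ⟨h.1, h.2⟩))).symm
    · push_neg at h
      rcases le_or_gt t (-r) with h1 | h1
      · rw [min_eq_right]
        rw [abs_of_nonpos (by linarith)]; linarith
      · have h2 := h h1
        rw [min_eq_right]
        rw [abs_of_nonneg (by linarith)]; exact h2
  -- measurability
  have mtil : Measurable ωtil := by
    have he : ωtil = fun t => if t ∈ Set.Ioo (-r) r then |t| else r :=
      funext fun t => by rw [hωtil]; rfl
    rw [he]
    exact Measurable.ite measurableSet_Ioo measurable_abs measurable_const
  have mhat : Measurable ωhat := by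
    have he : ωhat = fun t =>
        if t ∈ Set.Ioo 0 r then (1 : ℝ) else if t ∈ Set.Ioo (-r) 0 then -1 else 0 :=
      funext fun t => by rw [hωhat]; rfl
    rw [he]
    exact Measurable.ite measurableSet_Ioo measurable_const
      (Measurable.ite measurableSet_Ioo measurable_const measurable_const)
  -- ωtil is 1-Lipschitz
  have hlip : LipschitzWith 1 ωtil := by
    have habs : LipschitzWith 1 (fun t : ℝ => |t|) := by
      exact lipschitzWith_one_norm (E := ℝ)
    have h1 : LipschitzWith 1 (fun t : ℝ => min |t| r) := by
      have := habs.min ((LipschitzWith.const r).weaken zero_le_one)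
      simpa using this
    have : ωtil = fun t => min |t| r := funext htil_min
    rw [this]; exact h1
  -- bound on ωtil
  have htil_bd : ∀ t, |ωtil t| ≤ r := by
    intro t
    rw [htil_min]
    rw [abs_of_nonneg (le_min (abs_nonneg t) hr.le)]
    exact min_le_right _ _
  -- pointwise derivative of ωtil off the bad set
  have hderiv : ∀ t : ℝ, t ≠ 0 → t ≠ r → t ≠ -r → HasDerivAt ωtil (ωhat t) t := by
    intro t h0 hrr hnr
    rcases lt_trichotomy t 0 with ht | ht | ht
    · rcases lt_trichotomy t (-r) with h1 | h1 | h1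
      · -- t < -r : ωtil = r nearby, ωhat t = 0
        have hev : ωtil =ᶠ[nhds t] fun _ => r := by
          filter_upwards [Iio_mem_nhds h1] with z hz
          rw [hωtil, if_neg (by simp only [Set.mem_Iio] at hz; intro hc; linarith [hc.1])]
        have hval : ωhat t = 0 := by
          rw [hωhat, if_neg (by intro hc; linarith [hc.1]), if_neg (by intro hc; linarith [hc.1])]
        rw [hval]
        exact (hasDerivAt_const t r).congr_of_eventuallyEq hev
      · exact absurd h1 hnr
      · -- -r < t < 0 : ωtil = -z nearby, ωhat t = -1
        have hev : ωtil =ᶠ[nhds t] fun z => -z := by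
          filter_upwards [Ioo_mem_nhds h1 ht] with z hz
          rw [hωtil, if_pos ⟨hz.1, by linarith [hz.2]⟩]
          exact abs_of_neg hz.2
        have hval : ωhat t = -1 := by
          rw [hωhat, if_neg (by intro hc; linarith [hc.1]), if_pos ⟨h1, ht⟩]
        rw [hval]
        exact ((hasDerivAt_id t).neg).congr_of_eventuallyEq hev
    · exact absurd ht h0
    · rcases lt_trichotomy t r with h1 | h1 | h1
      · -- 0 < t < r : ωtil = z nearby, ωhat t = 1
        have hev : ωtil =ᶠ[nhds t] fun z => z := by
          filter_upwards [Ioo_mem_nhds ht h1] with z hz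
          rw [hωtil, if_pos ⟨by linarith [hz.1], hz.2⟩]
          exact abs_of_pos hz.1
        have hval : ωhat t = 1 := by rw [hωhat, if_pos ⟨ht, h1⟩]
        rw [hval]
        exact (hasDerivAt_id t).congr_of_eventuallyEq hev
      · exact absurd h1 hrr
      · -- r < t : ωtil = r nearby
        have hev : ωtil =ᶠ[nhds t] fun _ => r := by
          filter_upwards [Ioi_mem_nhds h1] with z hz
          rw [hωtil, if_neg (by simp only [Set.mem_Ioi] at hz; intro hc; linarith [hc.2])]
        have hval : ωhat t = 0 := by
          rw [hωhat, if_neg (by intro hc; linarith [hc.2]), if_neg (by intro hc; linarith [hc.2])]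
        rw [hval]
        exact (hasDerivAt_const t r).congr_of_eventuallyEq hev
  intro x
  have key := hasDerivAt_integral_of_dominated_loc_of_lip
    (F := fun z y => ωtil (z - y) * u y) (F' := fun y => ωhat (x - y) * u y)
    (x₀ := x) (bound := fun y => |u y|) (s := Set.univ) Filter.univ_mem
    (Filter.Eventually.of_forall fun z =>
      ((mtil.comp (measurable_const.sub measurable_id)).mul hu.measurable).aestronglyMeasurable)
    (by -- Integrable (F x₀)
      apply (hui.abs.const_mul r).mono'
        ((mtil.comp (measurable_const.sub measurable_id)).mul hu.measurable).aestronglyMeasurable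
      refine Filter.Eventually.of_forall fun y => ?_
      rw [Real.norm_eq_abs]
      show |ωtil (x - y) * u y| ≤ r * |u y|
      rw [abs_mul]
      exact mul_le_mul_of_nonneg_right (htil_bd _) (abs_nonneg _))
    (((mhat.comp (measurable_const.sub measurable_id)).mul hu.measurable).aestronglyMeasurable)
    (by -- Lipschitz
      refine Filter.Eventually.of_forall fun y => ?_
      apply LipschitzWith.lipschitzOnWith
      apply LipschitzWith.of_dist_le_mul
      intro a b
      have h1 := hlip.dist_le_mul (a - y) (b - y)
      simp only [Real.dist_eq] at h1 ⊢
      have hd : a - y - (b - y) = a - b := by ring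
      rw [hd] at h1
      rw [Real.coe_nnabs]
      calc |ωtil (a - y) * u y - ωtil (b - y) * u y|
          = |ωtil (a - y) - ωtil (b - y)| * |u y| := by rw [← abs_mul]; ring_nf
        _ ≤ |a - b| * |u y| := by
            apply mul_le_mul_of_nonneg_right _ (abs_nonneg _)
            calc |ωtil (a - y) - ωtil (b - y)| ≤ 1 * |a - b| := h1
              _ = |a - b| := one_mul _
        _ = |(|u y|)| * |a - b| := by rw [abs_abs]; ring)
    hui.abs
    (by -- a.e. differentiability
      have hS : volume ({x, x - r, x + r} : Set ℝ) = 0 :=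
        Set.Finite.measure_zero (Set.toFinite _) _
      refine Filter.eventually_of_mem (compl_mem_ae_iff.mpr hS) fun y hy => ?_
      simp only [Set.mem_compl_iff, Set.mem_insert_iff, Set.mem_singleton_iff, not_or] at hy
      obtain ⟨hy1, hy2, hy3⟩ := hy
      have hd := hderiv (x - y) (by intro h; apply hy1; linarith [sub_eq_zero.mp h])
        (by intro h; apply hy2; linarith) (by intro h; apply hy3; linarith)
      have h1 : HasDerivAt (fun z => ωtil (z - y)) (ωhat (x - y)) x := by
        have := hd.comp x ((hasDerivAt_id x).sub_const y)
        rw [mul_one] at this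
        exact this
      exact h1.mul_const (u y))
  exact key.2
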